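/- Let p : E → B be a fiber bundle with compact fiber F that admits a trivialization over B \ C, where C is a closed subset of B, and let f : E → K be a continuous map to a topological space K such that f is constant on the fiber p⁻¹(c) for each c ∈ C. Then there exist continuous maps p' : E → (B×F)/(C×F) and g : (B×F)/(C×F) → K such that π_B ∘ p' = p, f = g ∘ p', and p' restricts to an isomorphism of bundles over B \ C (in particular, p' maps p⁻¹(B \ C) homeomorphically onto π_B⁻¹(B \ C) commuting with the projections to B \ C). -/

import Mathlib

noncomputable section

open Metric unitInterval
set_option linter.unusedTactic false
set_option linter.unreachableTactic false
set_option linter.unnecessarySimpa false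

/-- The setoid on `K × F` collapsing each slice `{x} × F` with `x ∈ L` to a point. -/
def collapseSetoid (K F : Type*) (L : Set K) : Setoid (K × F) where
  r a b := a = b ∨ (a.1 = b.1 ∧ a.1 ∈ L)
  iseqv := by
    constructor
    · intro a; left; rfl
    · rintro a b (h | h)
      · left; exact h.symm
      · right; exact ⟨h.1.symm, h.1 ▸ h.2⟩
    · rintro a b c (h1 | h1) (h2 | h2)
      · left; exact h1.trans h2
      · right; exact ⟨by rw [h1]; exact h2.1, by rw [h1]; exact h2.2⟩
      · right; exact ⟨by rw [← h2]; exact h1.1, h1.2⟩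
      · right; exact ⟨h1.1.trans h2.1, h1.2⟩

/-- The quotient `(K × F)/(L × F)` of `K × F` in which each set `{x} × F`, `x ∈ L`,
is collapsed to a point and all other points are left alone. -/
def Collapse (K : Type*) [TopologicalSpace K] (F : Type*) [TopologicalSpace F]
    (L : Set K) : Type _ :=
  Quotient (collapseSetoid K F L)

instance (K : Type*) [TopologicalSpace K] (F : Type*) [TopologicalSpace F] (L : Set K) :
    TopologicalSpace (Collapse K F L) :=
  inferInstanceAs (TopologicalSpace (Quotient (collapseSetoid K F L)))

/-- The natural projection `π_K : (K × F)/(L × F) → K`. -/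
def collapseProj {K : Type*} [TopologicalSpace K] {F : Type*} [TopologicalSpace F]
    {L : Set K} : C(Collapse K F L, K) where
  toFun := Quotient.lift (fun a => a.1) (by
    rintro a b (h | h)
    · rw [h]
    · exact h.1)
  continuous_toFun := (continuous_fst).quotient_lift _

/-- The quotient map `K × F → (K × F)/(L × F)`. -/
def collapseMk {K : Type*} [TopologicalSpace K] {F : Type*} [TopologicalSpace F]
    (L : Set K) : C(K × F, Collapse K F L) where
  toFun := Quotient.mk (collapseSetoid K F L)
  continuous_toFun := continuous_quotient_mk'

/-- The map `(K × F)/(L × F) → (K × F')/(L × F')` induced by `g : F → F'` in the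
second coordinate. -/
def collapseMapF {K : Type*} [TopologicalSpace K] {F F' : Type*} [TopologicalSpace F]
    [TopologicalSpace F'] (L : Set K) (g : C(F, F')) :
    C(Collapse K F L, Collapse K F' L) where
  toFun := Quotient.map' (fun a => (a.1, g a.2))
    (by
      rintro a b (h | h)
      · left; rw [h]
      · right; exact ⟨h.1, h.2⟩)
  continuous_toFun := (continuous_fst.prodMk (g.continuous.comp continuous_snd)).quotient_map' _

/-! Away from `C` the trivialization identifies `E` with `(B \ C) × F`, which is the part of
`(B × F)/(C × F)` over `B \ C`; over `C` every fibre of `p` goes to its collapsed point. The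
resulting map `p' : E → (B × F)/(C × F)` is a quotient map. Away from `C` it is a homeomorphism
between open sets. Near a point `c ∈ C`, compactness of `F` gives two tube lemmas: `p` is a
closed map (locally it is a projection with compact fibre), so a neighbourhood of `p⁻¹(c)`
contains `p⁻¹(W)` for a neighbourhood `W` of `c`; and the neighbourhoods of the collapsed point
over `c` are exactly the preimages of neighbourhoods of `c`. As `f` is constant on the fibres of
`p'`, it descends to `g`. -/

open Set Filter Topology

def Homeomorph.prodSubtypeFst {X : Type*} [TopologicalSpace X] (s : Set X) (Y : Type*)
    [TopologicalSpace Y] : (s × Y) ≃ₜ {x : X × Y // x.1 ∈ s} where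
  toFun z := ⟨(z.1, z.2), z.1.2⟩
  invFun x := (⟨x.1.1, x.2⟩, x.1.2)
  left_inv _ := rfl
  right_inv _ := rfl
  continuous_toFun := by fun_prop
  continuous_invFun := by fun_prop

section Collapse

variable {K F : Type*} [TopologicalSpace K] [TopologicalSpace F] {L : Set K}

theorem collapseMk_eq_iff {x x' : K × F} :
    collapseMk L x = collapseMk L x' ↔ x = x' ∨ (x.1 = x'.1 ∧ x.1 ∈ L) :=
  Quotient.eq

theorem collapseMk_eq_of_mem {b : K} (hb : b ∈ L) (y y' : F) :
    collapseMk L (b, y) = collapseMk L (b, y') :=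
  collapseMk_eq_iff.2 (Or.inr ⟨rfl, hb⟩)

theorem isQuotientMap_collapseMk : IsQuotientMap (collapseMk L : K × F → Collapse K F L) :=
  isQuotientMap_quotient_mk'

theorem collapseMk_surjective : Function.Surjective (collapseMk L : K × F → Collapse K F L) :=
  isQuotientMap_collapseMk.surjective

theorem isHomeomorph_collapseMk_compl (hL : IsClosed L) :
    IsHomeomorph fun z : (Lᶜ : Set K) × F =>
      (⟨collapseMk L (z.1, z.2), z.1.2⟩ : (collapseProj ⁻¹' Lᶜ : Set (Collapse K F L))) := by
  refine isHomeomorph_iff_isQuotientMap_injective.2 ⟨?_, ?_⟩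
  · exact (isQuotientMap_collapseMk.restrictPreimage_isOpen
      (hL.isOpen_compl.preimage collapseProj.continuous)).comp
      (Homeomorph.prodSubtypeFst Lᶜ F).isQuotientMap
  · rintro z z' hzz'
    rcases collapseMk_eq_iff.1 (congrArg Subtype.val hzz') with h | ⟨-, h⟩
    · exact Prod.ext (Subtype.ext (congrArg Prod.fst h)) (congrArg Prod.snd h :)
    · exact absurd h z.1.2

def collapseComplHomeomorph (hL : IsClosed L) :
    ((Lᶜ : Set K) × F) ≃ₜ (collapseProj ⁻¹' Lᶜ : Set (Collapse K F L)) :=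
  (isHomeomorph_collapseMk_compl hL).homeomorph

@[simp]
theorem coe_collapseComplHomeomorph (hL : IsClosed L) (z : (Lᶜ : Set K) × F) :
    (collapseComplHomeomorph hL z : Collapse K F L) = collapseMk L (z.1, z.2) :=
  rfl

theorem nhds_collapseMk_of_mem [CompactSpace F] {b : K} (hb : b ∈ L) (y : F) :
    𝓝 (collapseMk L (b, y)) = comap collapseProj (𝓝 b) := by
  refine le_antisymm (collapseProj.continuous.tendsto _).le_comap fun U hU => ?_
  have hfibre : ∀ y', collapseMk L ⁻¹' U ∈ 𝓝 (b, y') := fun y' =>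
    (collapseMk L).continuous.continuousAt.preimage_mem_nhds
      (collapseMk_eq_of_mem hb y' y ▸ hU)
  -- the tube lemma, as `F` is compact
  have htube : collapseMk L ⁻¹' U ∈ 𝓝 b ×ˢ (⊤ : Filter F) := by
    rw [← nhdsSet_singleton, ← nhdsSet_univ, ← isCompact_singleton.nhdsSet_prod_eq isCompact_univ,
      mem_nhdsSet_iff_forall]
    rintro ⟨b', y'⟩ ⟨rfl, -⟩
    exact hfibre y'
  rw [mem_prod_top] at htube
  refine ⟨_, htube, fun x hx => ?_⟩
  obtain ⟨⟨b', y'⟩, rfl⟩ := collapseMk_surjective x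
  exact hx y'

end Collapse

theorem isClosedMap_of_forall_mem_baseSet
    {E B F : Type*} [TopologicalSpace E] [TopologicalSpace B] [TopologicalSpace F]
    [CompactSpace F] {p : E → B} (hp : ∀ b, ∃ t : Bundle.Trivialization F p, b ∈ t.baseSet) :
    IsClosedMap p := by
  have hcover : TopologicalSpace.IsOpenCover fun t : Bundle.Trivialization F p =>
      (⟨t.baseSet, t.open_baseSet⟩ : TopologicalSpace.Opens B) :=
    .of_sets _ (iUnion_eq_univ_iff.2 hp)
  refine hcover.isClosedMap_iff_restrictPreimage.2 fun t => ?_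
  have hfst : t.baseSet.restrictPreimage p = Prod.fst ∘ t.preimageHomeomorph subset_rfl := by
    ext; simp [Bundle.Trivialization.preimageHomeomorph_apply]
  rw [hfst]
  exact isClosedMap_fst_of_compactSpace.comp (t.preimageHomeomorph _).isClosedMap

section CollapseOfTrivialization

variable {E B F : Type*} [TopologicalSpace E] [TopologicalSpace B] [TopologicalSpace F]
  {p : E → B} {L : Set B} (h : ((Lᶜ : Set B) × F) ≃ₜ (p ⁻¹' Lᶜ : Set E)) (τ : E → F)

open Classical in
/-- Over `L` the fibre coordinate is collapsed, so `τ` only serves to name a point of `F`. -/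
def collapseMapOfTriv (e : E) : Collapse B F L :=
  collapseMk L (p e, if he : p e ∈ L then τ e else (h.symm ⟨e, he⟩).2)

variable {h τ}

theorem collapseProj_collapseMapOfTriv (e : E) :
    collapseProj (collapseMapOfTriv h τ e) = p e :=
  rfl

theorem collapseMapOfTriv_of_mem {e : E} (he : p e ∈ L) (y : F) :
    collapseMapOfTriv h τ e = collapseMk L (p e, y) := by
  rw [collapseMapOfTriv, dif_pos he]
  exact collapseMk_eq_of_mem he _ _

variable (hh : ∀ z, p (h z) = z.1)
include hh

theorem collapseMapOfTriv_eq_collapseComplHomeomorph (hL : IsClosed L) (e : p ⁻¹' Lᶜ) :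
    collapseMapOfTriv h τ e = (collapseComplHomeomorph hL (h.symm e) : Collapse B F L) := by
  have hbase : ((h.symm e).1 : B) = p e := by simpa using (hh (h.symm e)).symm
  rw [collapseMapOfTriv, dif_neg e.2, coe_collapseComplHomeomorph, hbase]

theorem collapseMapOfTriv_apply (z : (Lᶜ : Set B) × F) :
    collapseMapOfTriv h τ (h z) = collapseMk L (z.1, z.2) := by
  have he : p (h z) ∉ L := by rw [hh]; exact z.1.2
  simp only [collapseMapOfTriv, dif_neg he, Subtype.coe_eta, h.symm_apply_apply, hh]

theorem surjective_collapseMapOfTriv (hp : Function.Surjective p) :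
    Function.Surjective (collapseMapOfTriv h τ) := by
  intro x
  obtain ⟨⟨b, y⟩, rfl⟩ := collapseMk_surjective x
  by_cases hb : b ∈ L
  · obtain ⟨e, rfl⟩ := hp b
    exact ⟨e, collapseMapOfTriv_of_mem hb y⟩
  · exact ⟨h (⟨b, hb⟩, y), collapseMapOfTriv_apply hh _⟩

theorem injOn_collapseMapOfTriv (hL : IsClosed L) :
    InjOn (collapseMapOfTriv h τ) (p ⁻¹' Lᶜ) := by
  intro e he e' he' hee'
  have hψ : (collapseComplHomeomorph hL (h.symm ⟨e, he⟩) : Collapse B F L) =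
      collapseComplHomeomorph hL (h.symm ⟨e', he'⟩) := by
    rw [← collapseMapOfTriv_eq_collapseComplHomeomorph hh hL,
      ← collapseMapOfTriv_eq_collapseComplHomeomorph hh hL]
    exact hee'
  exact congrArg Subtype.val ((h.symm.trans (collapseComplHomeomorph hL)).injective
    (Subtype.ext hψ))

/-- Away from `L` the map is a homeomorphism onto an open set, so it preserves neighbourhoods. -/
theorem map_nhds_collapseMapOfTriv_of_notMem (hL : IsClosed L) (hp : Continuous p) {e : E}
    (he : p e ∉ L) : map (collapseMapOfTriv h τ) (𝓝 e) = 𝓝 (collapseMapOfTriv h τ e) := by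
  let ψ := h.symm.trans (collapseComplHomeomorph hL)
  have hS : IsOpen (p ⁻¹' Lᶜ) := hL.isOpen_compl.preimage hp
  have hT : IsOpen (collapseProj ⁻¹' Lᶜ : Set (Collapse B F L)) :=
    hL.isOpen_compl.preimage collapseProj.continuous
  have hcomm : Subtype.val ∘ ψ = collapseMapOfTriv h τ ∘ Subtype.val := funext fun e =>
    (collapseMapOfTriv_eq_collapseComplHomeomorph hh hL e).symm
  calc map (collapseMapOfTriv h τ) (𝓝 e)
      = map (collapseMapOfTriv h τ ∘ Subtype.val) (𝓝 (⟨e, he⟩ : p ⁻¹' Lᶜ)) := by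
        rw [← map_map, hS.isOpenEmbedding_subtypeVal.map_nhds_eq]
    _ = map Subtype.val (𝓝 (ψ ⟨e, he⟩)) := by
        rw [← hcomm, ← map_map, ψ.map_nhds_eq]
    _ = 𝓝 (collapseMapOfTriv h τ e) := by
        rw [hT.isOpenEmbedding_subtypeVal.map_nhds_eq, ← Function.comp_apply (f := Subtype.val),
          hcomm]; rfl

theorem continuous_collapseMapOfTriv [CompactSpace F] (hL : IsClosed L) (hp : Continuous p) :
    Continuous (collapseMapOfTriv h τ) := by
  refine continuous_iff_continuousAt.2 fun e => ?_
  by_cases he : p e ∈ L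
  · rw [ContinuousAt, collapseMapOfTriv_of_mem he (τ e), nhds_collapseMk_of_mem he,
      tendsto_comap_iff]
    exact hp.continuousAt
  · exact (map_nhds_collapseMapOfTriv_of_notMem hh hL hp he).le

theorem isQuotientMap_collapseMapOfTriv [CompactSpace F] (hL : IsClosed L) (hp : Continuous p)
    (hsurj : Function.Surjective p) (hclosed : IsClosedMap p) :
    IsQuotientMap (collapseMapOfTriv h τ) := by
  have hPsurj := surjective_collapseMapOfTriv (τ := τ) hh hsurj
  refine (isQuotientMap_iff _).2 ⟨isCoinducing_iff.2 fun U =>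
    ⟨fun hU => ?_, fun hU => hU.preimage (continuous_collapseMapOfTriv hh hL hp)⟩, hPsurj⟩
  refine isOpen_iff_mem_nhds.2 (hPsurj.forall.2 fun e heU => ?_)
  by_cases he : p e ∈ L
  · -- the closed map `p` spreads the open neighbourhood of the fibre over nearby fibres
    have hfibre : ∀ᶠ b in 𝓝 (p e), ∀ e' ∈ p ⁻¹' {b}, collapseMapOfTriv h τ e' ∈ U :=
      hclosed.eventually_nhds_fiber _ fun e' he' => hU.mem_nhds <| by
        rwa [mem_preimage, collapseMapOfTriv_of_mem (he' ▸ he) (τ e), he',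
          ← collapseMapOfTriv_of_mem he]
    rw [collapseMapOfTriv_of_mem he (τ e), nhds_collapseMk_of_mem he]
    refine eventually_comap.2 (hfibre.mono fun b hb x hx => ?_)
    obtain ⟨e', rfl⟩ := hPsurj x
    exact hb e' hx
  · rw [← map_nhds_collapseMapOfTriv_of_notMem hh hL hp he]
    exact hU.mem_nhds heU

end CollapseOfTrivialization

/-- Let `p : E → B` be a fiber bundle with compact fiber `F` admitting a
trivialization over `B \ C`, `C` closed in `B`, and let `f : E → K` be continuous and
constant on the fiber `p⁻¹(c)` for each `c ∈ C`. Then there are continuous maps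
`p' : E → (B×F)/(C×F)` and `g : (B×F)/(C×F) → K` with `π_B ∘ p' = p`, `f = g ∘ p'`, and
`p'` restricting to an isomorphism of bundles over `B \ C` (in particular, mapping
`p⁻¹(B \ C)` homeomorphically onto `π_B⁻¹(B \ C)`, commuting with the projections). -/
theorem stmt17 {E B F K : Type*} [TopologicalSpace E] [TopologicalSpace B]
    [TopologicalSpace F] [TopologicalSpace K] [CompactSpace F]
    (p : C(E, B)) (hp : Function.Surjective p)
    (hbundle : ∀ b : B, ∃ e : Bundle.Trivialization F (p : E → B), b ∈ e.baseSet)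
    (Cs : Set B) (hCs : IsClosed Cs)
    (htriv : ∃ h : ((Csᶜ : Set B) × F) ≃ₜ ((p : E → B) ⁻¹' Csᶜ : Set E),
      ∀ z : (Csᶜ : Set B) × F, p ((h z : E)) = (z.1 : B))
    (f : C(E, K))
    (hf : ∀ c ∈ Cs, ∀ e₁ e₂ : E, p e₁ = c → p e₂ = c → f e₁ = f e₂) :
    ∃ (p' : C(E, Collapse B F Cs)) (g : C(Collapse B F Cs, K)),
      (∀ e : E, collapseProj (p' e) = p e) ∧
      (∀ e : E, g (p' e) = f e) ∧
      ∃ ψ : ((p : E → B) ⁻¹' Csᶜ : Set E) ≃ₜ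
          ((collapseProj (K := B) (F := F) (L := Cs) : Collapse B F Cs → B) ⁻¹' Csᶜ :
            Set (Collapse B F Cs)),
        ∀ e : ((p : E → B) ⁻¹' Csᶜ : Set E), (ψ e : Collapse B F Cs) = p' (e : E) := by
  obtain ⟨h, hh⟩ := htriv
  let τ e := ((hbundle (p e)).choose e).2
  let P := collapseMapOfTriv h τ
  have hP : IsQuotientMap P := isQuotientMap_collapseMapOfTriv hh hCs p.continuous hp
    (isClosedMap_of_forall_mem_baseSet hbundle)
  have hfP : Function.FactorsThrough f P := fun e₁ e₂ hP₁₂ => by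
    have hp₁₂ : p e₁ = p e₂ := congrArg collapseProj hP₁₂
    by_cases he₁ : p e₁ ∈ Cs
    · exact hf _ he₁ e₁ e₂ rfl hp₁₂.symm
    · rw [injOn_collapseMapOfTriv hh hCs he₁ (hp₁₂ ▸ he₁ : p e₂ ∉ Cs) hP₁₂]
  refine ⟨⟨P, hP.continuous⟩, hP.lift f hfP, collapseProj_collapseMapOfTriv,
    DFunLike.congr_fun (hP.lift_comp f hfP), h.symm.trans (collapseComplHomeomorph hCs),
    fun e => (collapseMapOfTriv_eq_collapseComplHomeomorph (τ := τ) hh hCs e).symm⟩
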